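/- arXiv:2409.04287 — 2 statements merged into one kernel-verified Lean document; each statement's English description precedes it below -/
import Mathlib

section
/- Define λ₂⁰(r,a,b) = -(r^{2σ₁}/2)(1 + a r^{2(σ₂-σ₁)})(1 + Γ₂(r,a,b)). Then for all j, m ∈ ℕ, |∂^{j+m}/(∂aʲ ∂bᵐ) λ₂⁰(r,a,b)| ≤ C r^{2σ₁+2j(σ₂-σ₁)+2m(σ-2σ₁)} uniformly on (0,ε*] × [0,1]², and at (a,b)=(0,0) the derivative equals C_{2,j,m} r^{2σ₁+2j(σ₂-σ₁)+2m(σ-2σ₁)} for some constant C_{2,j,m}. -/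
open Real Set

noncomputable def Gamma1 (σ₁ σ₂ r a : ℝ) : ℝ := (1 + a * r ^ (2*(σ₂-σ₁)))⁻¹

noncomputable def Gamma2 (σ σ₁ σ₂ r a b : ℝ) : ℝ :=
  Real.sqrt (1 - 4*b*r ^ (2*(σ-2*σ₁)) * (Gamma1 σ₁ σ₂ r a)^2)

/-- Mixed partial derivative `∂^{j+m}/(∂aʲ ∂bᵐ)`. -/
noncomputable def pderiv2 (j m : ℕ) (f : ℝ → ℝ → ℝ) (a b : ℝ) : ℝ :=
  iteratedDeriv m (fun b' => iteratedDeriv j (fun a' => f a' b') a) b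

noncomputable def lam1 (σ σ₁ σ₂ r a b : ℝ) : ℝ :=
  -2 * r ^ (2*(σ-σ₁)) * Gamma1 σ₁ σ₂ r a * (1 + Gamma2 σ σ₁ σ₂ r a b)⁻¹

noncomputable def lam2 (σ σ₁ σ₂ r a b : ℝ) : ℝ :=
  -(r ^ (2*σ₁) / 2) * (1 + a * r ^ (2*(σ₂-σ₁))) * (1 + Gamma2 σ σ₁ σ₂ r a b)

noncomputable def Gfun (σ σ₁ σ₂ r a b : ℝ) : ℝ :=
  r ^ (2*σ₁) * (1 + a * r ^ (2*(σ₂-σ₁))) * Gamma2 σ σ₁ σ₂ r a b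

/-!
Writing `x = r^{2(σ₂-σ₁)} a` and `y = r^{2(σ-2σ₁)} b`, one has `λ₂⁰(r,a,b) = r^{2σ₁} Φ(x, y)` for
a single function `Φ` (`lam2Profile`), so by the chain rule the `(j, m)` mixed derivative of `λ₂⁰`
is `r^{2σ₁+2j(σ₂-σ₁)+2m(σ-2σ₁)}` times that of `Φ` at `(x, y)`. At `(a, b) = (0, 0)` this is a
derivative of `Φ` at the origin, a constant. In general `Φ` is smooth where the square root has
a positive argument, and the points `(x, y)` fill the continuous image of `[0, ε*] × [0, 1]²`:
a compact set inside that region, because the exponents are positive (so `r = 0` goes to the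
origin) and by `hpos`. Continuous derivatives of `Φ` are bounded on it.
-/

open scoped ContDiff

/-- Unlike `iteratedDeriv_comp_const_mul`, this needs no smoothness of `f`: `deriv_comp_mul_left`
holds for every function. -/
theorem iteratedDeriv_comp_mul_left {𝕜 F : Type*} [NontriviallyNormedField 𝕜]
    [NormedAddCommGroup F] [NormedSpace 𝕜 F] (n : ℕ) (f : 𝕜 → F) (c : 𝕜) :
    iteratedDeriv n (fun x => f (c * x)) = fun x => c ^ n • iteratedDeriv n f (c * x) := by
  induction n with
  | zero => simp
  | succ n ih =>
    funext x
    rw [iteratedDeriv_succ, ih, deriv_fun_const_smul_field, iteratedDeriv_succ, pow_succ, mul_smul]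
    exact congrArg _ (deriv_comp_mul_left c (iteratedDeriv n f) x)

theorem pderiv2_const_mul_comp_mul (j m : ℕ) (f : ℝ → ℝ → ℝ) (c R B a b : ℝ) :
    pderiv2 j m (fun a' b' => c * f (R * a') (B * b')) a b
      = c * R ^ j * B ^ m * pderiv2 j m f (R * a) (B * b) := by
  have hinner : ∀ b', iteratedDeriv j (fun a' => c * f (R * a') (B * b')) a
      = c * R ^ j * iteratedDeriv j (fun x => f x (B * b')) (R * a) := fun b' => by
    rw [iteratedDeriv_const_mul_field, iteratedDeriv_comp_mul_left _ (fun x => f x (B * b'))]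
    simp only [smul_eq_mul, mul_assoc]
  unfold pderiv2
  simp only [hinner]
  rw [iteratedDeriv_const_mul_field,
    iteratedDeriv_comp_mul_left _ (fun y => iteratedDeriv j (fun x => f x y) (R * a))]
  simp only [smul_eq_mul, mul_assoc]

noncomputable def partialFst (f : ℝ → ℝ → ℝ) (x y : ℝ) : ℝ := deriv (fun x' => f x' y) x

noncomputable def partialSnd (f : ℝ → ℝ → ℝ) (x y : ℝ) : ℝ := deriv (f x) y

theorem iteratedDeriv_fst_eq_iterate_partialFst (j : ℕ) (f : ℝ → ℝ → ℝ) (x y : ℝ) :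
    iteratedDeriv j (fun x' => f x' y) x = (partialFst^[j] f) x y := by
  induction j generalizing f with
  | zero => simp
  | succ j ih => rw [iteratedDeriv_succ', Function.iterate_succ_apply, ← ih]; rfl

theorem iteratedDeriv_snd_eq_iterate_partialSnd (m : ℕ) (f : ℝ → ℝ → ℝ) (x y : ℝ) :
    iteratedDeriv m (f x) y = (partialSnd^[m] f) x y := by
  induction m generalizing f with
  | zero => simp
  | succ m ih => rw [iteratedDeriv_succ', Function.iterate_succ_apply, ← ih]; rfl

theorem pderiv2_eq_iterate_partial (j m : ℕ) (f : ℝ → ℝ → ℝ) :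
    pderiv2 j m f = partialSnd^[m] (partialFst^[j] f) := by
  funext a b
  unfold pderiv2
  simp only [iteratedDeriv_fst_eq_iterate_partialFst]
  exact iteratedDeriv_snd_eq_iterate_partialSnd m _ a b

theorem ContDiffOn.uncurry_partialFst {f : ℝ → ℝ → ℝ} {U : Set (ℝ × ℝ)} (hU : IsOpen U)
    (hf : ContDiffOn ℝ ∞ (Function.uncurry f) U) :
    ContDiffOn ℝ ∞ (Function.uncurry (partialFst f)) U := by
  refine ((hf.fderiv_of_isOpen hU le_rfl).clm_apply
    (contDiffOn_const (c := ((1, 0) : ℝ × ℝ)))).congr ?_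
  rintro ⟨x, y⟩ hp
  have hf' : HasFDerivAt (Function.uncurry f) (fderiv ℝ (Function.uncurry f) (x, y)) (x, y) :=
    ((hf.contDiffAt (hU.mem_nhds hp)).differentiableAt (by simp)).hasFDerivAt
  have hline : HasDerivAt (fun x' : ℝ => (x', y)) ((1 : ℝ), (0 : ℝ)) x :=
    (hasDerivAt_id x).prodMk (hasDerivAt_const x y)
  exact (hf'.comp_hasDerivAt x hline).deriv

theorem ContDiffOn.uncurry_partialSnd {f : ℝ → ℝ → ℝ} {U : Set (ℝ × ℝ)} (hU : IsOpen U)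
    (hf : ContDiffOn ℝ ∞ (Function.uncurry f) U) :
    ContDiffOn ℝ ∞ (Function.uncurry (partialSnd f)) U := by
  refine ((hf.fderiv_of_isOpen hU le_rfl).clm_apply
    (contDiffOn_const (c := ((0, 1) : ℝ × ℝ)))).congr ?_
  rintro ⟨x, y⟩ hp
  have hf' : HasFDerivAt (Function.uncurry f) (fderiv ℝ (Function.uncurry f) (x, y)) (x, y) :=
    ((hf.contDiffAt (hU.mem_nhds hp)).differentiableAt (by simp)).hasFDerivAt
  have hline : HasDerivAt (fun y' : ℝ => (x, y')) ((0 : ℝ), (1 : ℝ)) y :=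
    (hasDerivAt_const y x).prodMk (hasDerivAt_id y)
  exact (hf'.comp_hasDerivAt y hline).deriv

theorem ContDiffOn.uncurry_pderiv2 {f : ℝ → ℝ → ℝ} {U : Set (ℝ × ℝ)} (hU : IsOpen U)
    (hf : ContDiffOn ℝ ∞ (Function.uncurry f) U) (j m : ℕ) :
    ContDiffOn ℝ ∞ (Function.uncurry (pderiv2 j m f)) U := by
  rw [pderiv2_eq_iterate_partial]
  refine Function.Iterate.rec (fun g => ContDiffOn ℝ ∞ (Function.uncurry g) U) ?_
    (fun _ hg => ContDiffOn.uncurry_partialSnd hU hg) m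
  exact Function.Iterate.rec (fun g => ContDiffOn ℝ ∞ (Function.uncurry g) U) hf
    (fun _ hg => ContDiffOn.uncurry_partialFst hU hg) j

noncomputable def lam2Profile (x y : ℝ) : ℝ :=
  -(1 / 2) * (1 + x) * (1 + √(1 - 4 * y * ((1 + x)⁻¹) ^ 2))

def lam2Domain : Set (ℝ × ℝ) := {p | 1 + p.1 ≠ 0 ∧ 0 < 1 - 4 * p.2 * ((1 + p.1)⁻¹) ^ 2}

theorem isOpen_lam2Domain : IsOpen lam2Domain := by
  have hcont : ContinuousOn (fun p : ℝ × ℝ => 1 - 4 * p.2 * ((1 + p.1)⁻¹) ^ 2)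
      {p | 1 + p.1 ≠ 0} := by
    have hinv : ContinuousOn (fun p : ℝ × ℝ => (1 + p.1)⁻¹) {p | 1 + p.1 ≠ 0} :=
      ContinuousOn.inv₀ (by fun_prop) fun _ h => h
    fun_prop
  exact hcont.isOpen_inter_preimage (isOpen_ne_fun (by fun_prop) (by fun_prop)) isOpen_Ioi

theorem contDiffOn_lam2Profile : ContDiffOn ℝ ∞ (Function.uncurry lam2Profile) lam2Domain := by
  rintro p ⟨hp, hsqrt⟩
  apply ContDiffAt.contDiffWithinAt
  show ContDiffAt ℝ ∞
    (fun p : ℝ × ℝ => -(1 / 2) * (1 + p.1) * (1 + √(1 - 4 * p.2 * ((1 + p.1)⁻¹) ^ 2))) p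
  fun_prop (disch := first | exact hp | exact hsqrt.ne')

theorem lam2_eq_lam2Profile (σ σ₁ σ₂ r a b : ℝ) :
    lam2 σ σ₁ σ₂ r a b
      = r ^ (2*σ₁) * lam2Profile (r ^ (2*(σ₂-σ₁)) * a) (r ^ (2*(σ-2*σ₁)) * b) := by
  rw [lam2, Gamma2, Gamma1, lam2Profile, mul_comm a, mul_comm (r ^ _) b, ← mul_assoc 4 b]
  ring

theorem pderiv2_lam2 (σ σ₁ σ₂ : ℝ) {r : ℝ} (hr : 0 < r) (j m : ℕ) (a b : ℝ) :
    pderiv2 j m (fun a' b' => lam2 σ σ₁ σ₂ r a' b') a b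
      = r ^ (2*σ₁ + 2*(j:ℝ)*(σ₂-σ₁) + 2*(m:ℝ)*(σ-2*σ₁))
        * pderiv2 j m lam2Profile (r ^ (2*(σ₂-σ₁)) * a) (r ^ (2*(σ-2*σ₁)) * b) := by
  simp only [lam2_eq_lam2Profile]
  rw [pderiv2_const_mul_comp_mul, ← rpow_natCast, ← rpow_natCast, ← rpow_mul hr.le,
    ← rpow_mul hr.le, ← rpow_add hr, ← rpow_add hr]
  ring_nf

def scaledBox (ε α β : ℝ) : Set (ℝ × ℝ) :=
  (fun p : ℝ × ℝ × ℝ => (p.1 ^ α * p.2.1, p.1 ^ β * p.2.2)) '' (Icc 0 ε ×ˢ Icc 0 1 ×ˢ Icc 0 1)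

theorem isCompact_scaledBox (ε : ℝ) {α β : ℝ} (hα : 0 ≤ α) (hβ : 0 ≤ β) :
    IsCompact (scaledBox ε α β) := by
  refine (isCompact_Icc.prod (isCompact_Icc.prod isCompact_Icc)).image ?_
  have := continuous_rpow_const hα
  have := continuous_rpow_const hβ
  fun_prop

theorem scaledBox_subset_lam2Domain {σ σ₁ σ₂ εs : ℝ} (hα : 0 < 2*(σ₂-σ₁)) (hβ : 0 < 2*(σ-2*σ₁))
    (hpos : ∀ r ∈ Set.Ioc (0:ℝ) εs, ∀ a ∈ Set.Icc (0:ℝ) 1, ∀ b ∈ Set.Icc (0:ℝ) 1,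
      0 < 1 - 4*b*r ^ (2*(σ-2*σ₁)) * (Gamma1 σ₁ σ₂ r a)^2) :
    scaledBox εs (2*(σ₂-σ₁)) (2*(σ-2*σ₁)) ⊆ lam2Domain := by
  rintro _ ⟨⟨r, a, b⟩, ⟨⟨hr0, hrε⟩, ha, hb⟩, rfl⟩
  dsimp only at hr0 hrε ha hb ⊢
  rcases hr0.eq_or_lt with rfl | hr
  · simp [lam2Domain, zero_rpow hα.ne', zero_rpow hβ.ne']
  · have hx : 0 ≤ r ^ (2*(σ₂-σ₁)) * a := mul_nonneg (rpow_nonneg hr.le _) ha.1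
    refine ⟨by positivity, ?_⟩
    have := hpos r ⟨hr, hrε⟩ a ha b hb
    rwa [Gamma1, mul_comm a, mul_assoc 4 b, mul_comm b] at this

theorem stmt3_general (σ σ₁ σ₂ εs : ℝ) (h12 : σ₁ < σ / 2)
    (h22 : σ / 2 < σ₂)
    (hpos : ∀ r ∈ Set.Ioc (0:ℝ) εs, ∀ a ∈ Set.Icc (0:ℝ) 1, ∀ b ∈ Set.Icc (0:ℝ) 1,
      0 < 1 - 4*b*r ^ (2*(σ-2*σ₁)) * (Gamma1 σ₁ σ₂ r a)^2)
    (j m : ℕ) :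
    (∃ C > 0, ∀ r ∈ Set.Ioc (0:ℝ) εs, ∀ a ∈ Set.Icc (0:ℝ) 1, ∀ b ∈ Set.Icc (0:ℝ) 1,
      |pderiv2 j m (fun a' b' => lam2 σ σ₁ σ₂ r a' b') a b|
        ≤ C * r ^ (2*σ₁ + 2*(j:ℝ)*(σ₂-σ₁) + 2*(m:ℝ)*(σ-2*σ₁))) ∧
    (∃ C2jm : ℝ, ∀ r ∈ Set.Ioc (0:ℝ) εs,
      pderiv2 j m (fun a' b' => lam2 σ σ₁ σ₂ r a' b') 0 0
        = C2jm * r ^ (2*σ₁ + 2*(j:ℝ)*(σ₂-σ₁) + 2*(m:ℝ)*(σ-2*σ₁))) := by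
  have hα : 0 < 2*(σ₂-σ₁) := by linarith
  have hβ : 0 < 2*(σ-2*σ₁) := by linarith
  obtain ⟨C, hC⟩ := (isCompact_scaledBox εs hα.le hβ.le).exists_bound_of_continuousOn
    ((contDiffOn_lam2Profile.uncurry_pderiv2 isOpen_lam2Domain j m).continuousOn.mono
      (scaledBox_subset_lam2Domain hα hβ hpos))
  refine ⟨⟨max C 1, by positivity, fun r hr a ha b hb => ?_⟩,
    ⟨pderiv2 j m lam2Profile 0 0, fun r hr => ?_⟩⟩
  · have hbox : (r ^ (2*(σ₂-σ₁)) * a, r ^ (2*(σ-2*σ₁)) * b) ∈ scaledBox εs _ _ :=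
      ⟨(r, a, b), ⟨⟨hr.1.le, hr.2⟩, ha, hb⟩, rfl⟩
    rw [pderiv2_lam2 σ σ₁ σ₂ hr.1, abs_mul, abs_of_pos (rpow_pos_of_pos hr.1 _), mul_comm]
    exact mul_le_mul_of_nonneg_right ((hC _ hbox).trans (le_max_left _ _))
      (rpow_nonneg hr.1.le _)
  · rw [pderiv2_lam2 σ σ₁ σ₂ hr.1, mul_zero, mul_zero, mul_comm]

theorem stmt3 (σ σ₁ σ₂ εs : ℝ) (hσ : 1 ≤ σ) (hσ₁ : 0 ≤ σ₁) (h12 : σ₁ < σ / 2)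
    (h22 : σ / 2 < σ₂) (h2σ : σ₂ ≤ σ) (hε : 0 < εs)
    (hpos : ∀ r ∈ Set.Ioc (0:ℝ) εs, ∀ a ∈ Set.Icc (0:ℝ) 1, ∀ b ∈ Set.Icc (0:ℝ) 1,
      0 < 1 - 4*b*r ^ (2*(σ-2*σ₁)) * (Gamma1 σ₁ σ₂ r a)^2)
    (j m : ℕ) :
    (∃ C > 0, ∀ r ∈ Set.Ioc (0:ℝ) εs, ∀ a ∈ Set.Icc (0:ℝ) 1, ∀ b ∈ Set.Icc (0:ℝ) 1,
      |pderiv2 j m (fun a' b' => lam2 σ σ₁ σ₂ r a' b') a b|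
        ≤ C * r ^ (2*σ₁ + 2*(j:ℝ)*(σ₂-σ₁) + 2*(m:ℝ)*(σ-2*σ₁))) ∧
    (∃ C2jm : ℝ, ∀ r ∈ Set.Ioc (0:ℝ) εs,
      pderiv2 j m (fun a' b' => lam2 σ σ₁ σ₂ r a' b') 0 0
        = C2jm * r ^ (2*σ₁ + 2*(j:ℝ)*(σ₂-σ₁) + 2*(m:ℝ)*(σ-2*σ₁))) :=
  stmt3_general σ σ₁ σ₂ εs h12 h22 hpos j m
end

section
/- With λ₁⁰ as above and for (j,m) ≥ (0,0), the value of ∂^{j+m}/(∂aʲ ∂bᵐ) e^{λ₁⁰(r,a,b)t} at (a,b) = (0,0) equals e^{-r^{2(σ-σ₁)}t} · r^{2j(σ₂-σ₁)+2m(σ-2σ₁)} · P_{j,m}(r^{2(σ-σ₁)} t), where P_{j,m} is a polynomial of degree at most j+m with P_{j,m}(0) = 0 when j+m ≥ 1, whose coefficients depend only on j, m, σ, σ₁, σ₂. -/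
/-!
Write `λ₁⁰(r,a,b) t = x F(aA, bB)` with `x = r^{2(σ-σ₁)} t`, `A = r^{2(σ₂-σ₁)}`,
`B = r^{2(σ-2σ₁)}` and `F(u,v) = -2 (1+u)⁻¹ (1 + √(1 - 4v(1+u)⁻²))⁻¹`, which is smooth near
`(0,0)` with `F(0,0) = -1`. By the chain rule each derivative in `a` (resp. `b`) contributes a
factor `A` (resp. `B`) and replaces `e^{xF} Q` by `e^{xF} (x ∂F Q + ∂Q)`. Starting from `Q = 1`,
after `j + m` derivatives `Q` is a polynomial in `x` of degree `≤ j + m` with smooth coefficients,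
and its constant term, being differentiated as a constant, vanishes once `j + m ≥ 1`.
Evaluating at `(a,b) = (0,0)` gives `e^{-x} A^j B^m P(x)`.
-/

open Real Set

open Filter Topology Polynomial
open scoped ContDiff

section SmoothCoeffPoly

variable {E : Type*} [NormedAddCommGroup E] [NormedSpace ℝ E] {U : Set E}
  {n n' : ℕ} {Q Q' : ℝ → E → ℝ}

def IsSmoothCoeffPoly (U : Set E) (n : ℕ) (Q : ℝ → E → ℝ) : Prop :=
  ∃ c : ℕ → E → ℝ, (∀ k, ContDiffOn ℝ ∞ (c k) U) ∧
    ∀ x, EqOn (Q x) (fun p => ∑ k ∈ Finset.range (n + 1), x ^ k * c k p) U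

theorem isSmoothCoeffPoly_const (a : ℝ) : IsSmoothCoeffPoly U 0 (fun _ _ => a) :=
  ⟨fun _ _ => a, fun _ => contDiffOn_const, fun x p _ => by simp⟩

theorem IsSmoothCoeffPoly.mono (hQ : IsSmoothCoeffPoly U n Q) (hn : n ≤ n') :
    IsSmoothCoeffPoly U n' Q := by
  obtain ⟨c, hc, hQc⟩ := hQ
  refine ⟨fun k p => if k ≤ n then c k p else 0, fun k => ?_, fun x p hp => ?_⟩
  · by_cases hk : k ≤ n
    · simpa only [hk, if_true] using hc k
    · simpa only [hk, if_false] using contDiffOn_const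
  rw [hQc x hp]
  refine (Finset.sum_congr rfl fun k hk => ?_).trans
    (Finset.sum_subset (Finset.range_subset_range.2 (by omega)) fun k _ hk => ?_)
  · simp only [Finset.mem_range, Nat.lt_succ_iff] at hk
    simp only [hk, if_true]
  · simp only [Finset.mem_range, Nat.lt_succ_iff, not_le] at hk
    simp only [hk.not_ge, if_false, mul_zero]

theorem IsSmoothCoeffPoly.add (hQ : IsSmoothCoeffPoly U n Q) (hQ' : IsSmoothCoeffPoly U n Q') :
    IsSmoothCoeffPoly U n (fun x p => Q x p + Q' x p) := by
  obtain ⟨c, hc, hQc⟩ := hQ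
  obtain ⟨c', hc', hQc'⟩ := hQ'
  refine ⟨fun k p => c k p + c' k p, fun k => (hc k).add (hc' k), fun x p hp => ?_⟩
  simp only [hQc x hp, hQc' x hp, mul_add, Finset.sum_add_distrib]

theorem IsSmoothCoeffPoly.x_mul {f : E → ℝ} (hf : ContDiffOn ℝ ∞ f U)
    (hQ : IsSmoothCoeffPoly U n Q) : IsSmoothCoeffPoly U (n + 1) (fun x p => x * f p * Q x p) := by
  obtain ⟨c, hc, hQc⟩ := hQ
  refine ⟨fun | 0 => 0 | k + 1 => fun p => f p * c k p, fun k => ?_, fun x p hp => ?_⟩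
  · cases k
    exacts [contDiffOn_const, hf.mul (hc _)]
  dsimp only
  rw [hQc x hp, Finset.sum_range_succ' _ (n + 1), Finset.mul_sum]
  simp only [Pi.zero_apply, mul_zero, add_zero]
  exact Finset.sum_congr rfl fun k _ => by ring

theorem hasFDerivAt_sum_pow_mul {c : ℕ → E → ℝ} (hU : IsOpen U) (hc : ∀ k, ContDiffOn ℝ ∞ (c k) U)
    (N : ℕ) (x : ℝ) {p : E} (hp : p ∈ U) :
    HasFDerivAt (fun p => ∑ k ∈ Finset.range N, x ^ k * c k p)
      (∑ k ∈ Finset.range N, x ^ k • fderiv ℝ (c k) p) p :=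
  HasFDerivAt.fun_sum fun k _ =>
    (((hc k).differentiableOn (by simp)).differentiableAt (hU.mem_nhds hp)).hasFDerivAt.const_mul _

theorem IsSmoothCoeffPoly.differentiableAt (hU : IsOpen U) (hQ : IsSmoothCoeffPoly U n Q)
    (x : ℝ) {p : E} (hp : p ∈ U) : DifferentiableAt ℝ (Q x) p := by
  obtain ⟨c, hc, hQc⟩ := hQ
  exact (hasFDerivAt_sum_pow_mul hU hc _ x hp).differentiableAt.congr_of_eventuallyEq
    (eventuallyEq_of_mem (hU.mem_nhds hp) (hQc x))

theorem IsSmoothCoeffPoly.fderiv_apply (hU : IsOpen U) (hQ : IsSmoothCoeffPoly U n Q) (w : E) :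
    IsSmoothCoeffPoly U n (fun x p => fderiv ℝ (Q x) p w) := by
  obtain ⟨c, hc, hQc⟩ := hQ
  refine ⟨fun k p => fderiv ℝ (c k) p w,
    fun k => ((hc k).fderiv_of_isOpen hU (by simp)).clm_apply contDiffOn_const, fun x p hp => ?_⟩
  dsimp only
  rw [(eventuallyEq_of_mem (hU.mem_nhds hp) (hQc x)).fderiv_eq,
    (hasFDerivAt_sum_pow_mul hU hc _ x hp).fderiv]
  simp

theorem IsSmoothCoeffPoly.exists_polynomial (hQ : IsSmoothCoeffPoly U n Q) {p : E} (hp : p ∈ U) :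
    ∃ P : ℝ[X], P.natDegree ≤ n ∧ ∀ x, Q x p = P.eval x := by
  obtain ⟨c, -, hQc⟩ := hQ
  refine ⟨∑ k ∈ Finset.range (n + 1), C (c k p) * X ^ k,
    natDegree_sum_le_of_forall_le _ _ fun k hk => ?_, fun x => ?_⟩
  · exact (natDegree_C_mul_X_pow_le _ _).trans (Nat.lt_succ_iff.1 (Finset.mem_range.1 hk))
  · rw [hQc x hp, eval_finsetSum]
    simp only [eval_mul, eval_C, eval_pow, eval_X, mul_comm]

end SmoothCoeffPoly

section ConjDeriv

variable {E : Type*} [NormedAddCommGroup E] [NormedSpace ℝ E] {U : Set E} {n : ℕ}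
  {F : E → ℝ} {Q : ℝ → E → ℝ}

/-- `e^{-xF} ∂_w (e^{xF} Q)` -/
noncomputable def conjDerivAlong (F : E → ℝ) (w : E) (Q : ℝ → E → ℝ) : ℝ → E → ℝ :=
  fun x p => x * fderiv ℝ F p w * Q x p + fderiv ℝ (Q x) p w

theorem conjDerivAlong_smul (C : ℝ) (w : E) (x : ℝ) (p : E) :
    conjDerivAlong F (C • w) Q x p = C * conjDerivAlong F w Q x p := by
  simp only [conjDerivAlong, map_smul, smul_eq_mul]
  ring

theorem hasDerivAt_exp_mul_comp_mul {γ : ℝ → E} {v : E} {s x : ℝ}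
    (hF : DifferentiableAt ℝ F (γ s)) (hQ : DifferentiableAt ℝ (Q x) (γ s))
    (hγ : HasDerivAt γ v s) :
    HasDerivAt (fun s' => exp (x * F (γ s')) * Q x (γ s'))
      (exp (x * F (γ s)) * conjDerivAlong F v Q x (γ s)) s := by
  have hexp := ((hF.hasFDerivAt.comp_hasDerivAt s hγ).const_mul x).exp
  refine (hexp.mul (hQ.hasFDerivAt.comp_hasDerivAt s hγ)).congr_deriv ?_
  simp only [conjDerivAlong, Function.comp_apply]
  ring

theorem IsSmoothCoeffPoly.conjDerivAlong (hU : IsOpen U) (hF : ContDiffOn ℝ ∞ F U)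
    (hQ : IsSmoothCoeffPoly U n Q) (w : E) :
    IsSmoothCoeffPoly U (n + 1) (conjDerivAlong F w Q) :=
  (hQ.x_mul (((hF.fderiv_of_isOpen hU (by simp)).clm_apply contDiffOn_const))).add
    ((hQ.fderiv_apply hU w).mono n.le_succ)

theorem conjDerivAlong_zero_of_eqOn_const (hU : IsOpen U) {a : ℝ} (hQ : EqOn (Q 0) (fun _ => a) U)
    (w : E) {p : E} (hp : p ∈ U) : conjDerivAlong F w Q 0 p = 0 := by
  simp [conjDerivAlong, (eventuallyEq_of_mem (hU.mem_nhds hp) hQ).fderiv_eq]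

theorem deriv_eq_of_eqOn_exp_mul (hU : IsOpen U) (hF : ContDiffOn ℝ ∞ F U)
    (hQ : IsSmoothCoeffPoly U n Q) {g : ℝ → ℝ} {γ : ℝ → E} {w : E} {C K s x : ℝ}
    (hγ : HasDerivAt γ (C • w) s) (hs : γ s ∈ U)
    (hg : ∀ s', γ s' ∈ U → g s' = K * (exp (x * F (γ s')) * Q x (γ s'))) :
    deriv g s = K * C * (exp (x * F (γ s)) * conjDerivAlong F w Q x (γ s)) := by
  have hev : g =ᶠ[𝓝 s] fun s' => K * (exp (x * F (γ s')) * Q x (γ s')) :=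
    Filter.mem_of_superset (hγ.continuousAt.preimage_mem_nhds (hU.mem_nhds hs)) fun s' => hg s'
  have hFd := ((hF.differentiableOn (by simp)).differentiableAt (hU.mem_nhds hs))
  rw [hev.deriv_eq, ((hasDerivAt_exp_mul_comp_mul hFd (hQ.differentiableAt hU x hs) hγ).const_mul
    K).deriv, conjDerivAlong_smul]
  ring

end ConjDeriv

theorem pderiv2_succ_left_zero (f : ℝ → ℝ → ℝ) (j : ℕ) (a b : ℝ) :
    pderiv2 (j + 1) 0 f a b = deriv (fun a' => pderiv2 j 0 f a' b) a := by
  simp only [pderiv2, iteratedDeriv_zero, iteratedDeriv_succ]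

theorem pderiv2_succ_right (f : ℝ → ℝ → ℝ) (j m : ℕ) (a b : ℝ) :
    pderiv2 j (m + 1) f a b = deriv (fun b' => pderiv2 j m f a b') b := by
  simp only [pderiv2, iteratedDeriv_succ]

section ExpFactor

variable {U : Set (ℝ × ℝ)} {F : ℝ × ℝ → ℝ} {Q : ℝ → ℝ × ℝ → ℝ} {j m : ℕ}

def IsPderiv2ExpFactor (U : Set (ℝ × ℝ)) (F : ℝ × ℝ → ℝ) (j m : ℕ) (Q : ℝ → ℝ × ℝ → ℝ) :
    Prop :=
  IsSmoothCoeffPoly U (j + m) Q ∧ EqOn (Q 0) (fun _ => 0 ^ (j + m)) U ∧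
    ∀ x A B a b, (a * A, b * B) ∈ U →
      pderiv2 j m (fun a' b' => exp (x * F (a' * A, b' * B))) a b
        = A ^ j * B ^ m * (exp (x * F (a * A, b * B)) * Q x (a * A, b * B))

theorem isPderiv2ExpFactor_zero_zero : IsPderiv2ExpFactor U F 0 0 (fun _ _ => 1) :=
  ⟨isSmoothCoeffPoly_const 1, fun _ _ => by simp, fun x A B a b _ => by simp [pderiv2]⟩

theorem IsPderiv2ExpFactor.succ_left (hU : IsOpen U) (hF : ContDiffOn ℝ ∞ F U)
    (h : IsPderiv2ExpFactor U F j 0 Q) :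
    IsPderiv2ExpFactor U F (j + 1) 0 (conjDerivAlong F (1, 0) Q) := by
  obtain ⟨hQ, hQ0, hrep⟩ := h
  refine ⟨hQ.conjDerivAlong hU hF _, fun p hp => ?_, fun x A B a b hab => ?_⟩
  · simp [conjDerivAlong_zero_of_eqOn_const hU hQ0 _ hp]
  have hγ : HasDerivAt (fun a' => (a' * A, b * B)) (A • ((1 : ℝ), (0 : ℝ))) a := by
    simpa using ((hasDerivAt_id a).mul_const A).prodMk (hasDerivAt_const a (b * B))
  rw [pderiv2_succ_left_zero, deriv_eq_of_eqOn_exp_mul hU hF hQ hγ hab fun a' => hrep x A B a' b]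
  ring

theorem IsPderiv2ExpFactor.succ_right (hU : IsOpen U) (hF : ContDiffOn ℝ ∞ F U)
    (h : IsPderiv2ExpFactor U F j m Q) :
    IsPderiv2ExpFactor U F j (m + 1) (conjDerivAlong F (0, 1) Q) := by
  obtain ⟨hQ, hQ0, hrep⟩ := h
  refine ⟨hQ.conjDerivAlong hU hF _, fun p hp => ?_, fun x A B a b hab => ?_⟩
  · simp [conjDerivAlong_zero_of_eqOn_const hU hQ0 _ hp]
  have hγ : HasDerivAt (fun b' => (a * A, b' * B)) (B • ((0 : ℝ), (1 : ℝ))) b := by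
    simpa using (hasDerivAt_const b (a * A)).prodMk ((hasDerivAt_id b).mul_const B)
  rw [pderiv2_succ_right, deriv_eq_of_eqOn_exp_mul hU hF hQ hγ hab fun b' => hrep x A B a b']
  ring

theorem exists_isPderiv2ExpFactor (hU : IsOpen U) (hF : ContDiffOn ℝ ∞ F U) (j m : ℕ) :
    ∃ Q, IsPderiv2ExpFactor U F j m Q := by
  induction m with
  | zero =>
    induction j with
    | zero => exact ⟨_, isPderiv2ExpFactor_zero_zero⟩
    | succ j ih =>
      obtain ⟨Q, h⟩ := ih
      exact ⟨_, h.succ_left hU hF⟩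
  | succ m ih =>
    obtain ⟨Q, h⟩ := ih
    exact ⟨_, h.succ_right hU hF⟩

end ExpFactor

noncomputable def lam1Profile (p : ℝ × ℝ) : ℝ :=
  -2 * (1 + p.1)⁻¹ * (1 + √(1 - 4 * p.2 * ((1 + p.1)⁻¹) ^ 2))⁻¹

def lam1ProfileDomain : Set (ℝ × ℝ) := {p | 1 + p.1 ≠ 0 ∧ 4 * p.2 < (1 + p.1) ^ 2}

theorem isOpen_lam1ProfileDomain : IsOpen lam1ProfileDomain :=
  (isOpen_ne_fun (by fun_prop) continuous_const).inter
    (isOpen_lt (f := fun p : ℝ × ℝ => 4 * p.2) (by fun_prop) (by fun_prop))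

theorem zero_mem_lam1ProfileDomain : ((0 : ℝ), (0 : ℝ)) ∈ lam1ProfileDomain := by
  norm_num [lam1ProfileDomain]

theorem contDiffOn_lam1Profile : ContDiffOn ℝ ∞ lam1Profile lam1ProfileDomain := by
  rintro p ⟨hp1, hp2⟩
  have hdisc : 1 - 4 * p.2 * ((1 + p.1)⁻¹) ^ 2 ≠ 0 := by
    have : 1 - 4 * p.2 * ((1 + p.1)⁻¹) ^ 2 = ((1 + p.1) ^ 2 - 4 * p.2) * ((1 + p.1)⁻¹) ^ 2 := by
      field_simp
    rw [this]
    exact (mul_pos (sub_pos.2 hp2) (pow_two_pos_of_ne_zero (inv_ne_zero hp1))).ne'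
  have hsqrt : 1 + √(1 - 4 * p.2 * ((1 + p.1)⁻¹) ^ 2) ≠ 0 := by positivity
  have hinv : ContDiffAt ℝ ∞ (fun q : ℝ × ℝ => (1 + q.1)⁻¹) p :=
    (contDiffAt_const.add contDiffAt_fst).inv hp1
  refine ContDiffAt.contDiffWithinAt ((contDiffAt_const.mul hinv).mul (ContDiffAt.inv ?_ hsqrt))
  exact contDiffAt_const.add
    ((contDiffAt_const.sub ((contDiffAt_const.mul contDiffAt_snd).mul (hinv.pow 2))).sqrt hdisc)

theorem lam1Profile_zero : lam1Profile (0, 0) = -1 := by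
  norm_num [lam1Profile]

theorem lam1_mul_eq (σ σ₁ σ₂ r a b t : ℝ) :
    lam1 σ σ₁ σ₂ r a b * t = r ^ (2 * (σ - σ₁)) * t *
      lam1Profile (a * r ^ (2 * (σ₂ - σ₁)), b * r ^ (2 * (σ - 2 * σ₁))) := by
  simp only [lam1, Gamma1, Gamma2, lam1Profile]
  ring_nf

theorem stmt5_general (σ σ₁ σ₂ εs : ℝ) (j m : ℕ) :
    ∃ P : Polynomial ℝ, P.natDegree ≤ j + m ∧ (1 ≤ j + m → P.eval 0 = 0) ∧
      ∀ r ∈ Set.Ioc (0:ℝ) εs, ∀ t > (0:ℝ),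
        pderiv2 j m (fun a' b' => Real.exp (lam1 σ σ₁ σ₂ r a' b' * t)) 0 0
          = Real.exp (-(r ^ (2*(σ-σ₁))) * t)
              * r ^ (2*(j:ℝ)*(σ₂-σ₁) + 2*(m:ℝ)*(σ-2*σ₁))
              * P.eval (r ^ (2*(σ-σ₁)) * t) := by
  obtain ⟨Q, hQ, hQ0, hrep⟩ :=
    exists_isPderiv2ExpFactor isOpen_lam1ProfileDomain contDiffOn_lam1Profile j m
  obtain ⟨P, hPdeg, hPQ⟩ := hQ.exists_polynomial zero_mem_lam1ProfileDomain
  refine ⟨P, hPdeg, fun hjm => ?_, fun r hr t _ => ?_⟩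
  · rw [← hPQ, hQ0 zero_mem_lam1ProfileDomain, zero_pow (by omega)]
  have hpow : (r ^ (2 * (σ₂ - σ₁))) ^ j * (r ^ (2 * (σ - 2 * σ₁))) ^ m
      = r ^ (2 * (j : ℝ) * (σ₂ - σ₁) + 2 * (m : ℝ) * (σ - 2 * σ₁)) := by
    rw [← rpow_natCast, ← rpow_natCast, ← rpow_mul hr.1.le, ← rpow_mul hr.1.le,
      ← rpow_add hr.1]
    ring_nf
  simp_rw [lam1_mul_eq]
  rw [hrep _ _ _ 0 0 (by simpa using zero_mem_lam1ProfileDomain), ← hPQ, ← hpow]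
  simp only [zero_mul, lam1Profile_zero]
  ring_nf

theorem stmt5 (σ σ₁ σ₂ εs : ℝ) (hσ : 1 ≤ σ) (hσ₁ : 0 ≤ σ₁) (h12 : σ₁ < σ / 2)
    (h22 : σ / 2 < σ₂) (h2σ : σ₂ ≤ σ) (hε : 0 < εs)
    (j m : ℕ) :
    ∃ P : Polynomial ℝ, P.natDegree ≤ j + m ∧ (1 ≤ j + m → P.eval 0 = 0) ∧
      ∀ r ∈ Set.Ioc (0:ℝ) εs, ∀ t > (0:ℝ),
        pderiv2 j m (fun a' b' => Real.exp (lam1 σ σ₁ σ₂ r a' b' * t)) 0 0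
          = Real.exp (-(r ^ (2*(σ-σ₁))) * t)
              * r ^ (2*(j:ℝ)*(σ₂-σ₁) + 2*(m:ℝ)*(σ-2*σ₁))
              * P.eval (r ^ (2*(σ-σ₁)) * t) :=
  stmt5_general σ σ₁ σ₂ εs j m
end
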